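/- arXiv:2502.01127 — 3 statements merged into one kernel-verified Lean document; each statement's English description precedes it below -/
import Mathlib

section
/- If the common action set 𝒳 ⊆ ℝ^d is nonempty, compact, and convex, then the Battling Influencers Game has at least one pure Nash equilibrium. -/
open scoped RealInnerProductSpace

noncomputable section

/-- Player `i`'s loss in the Battling Influencers Game:
`ℓ_i(x) = ‖w_0 x_0 + ∑_{j=1}^n w_j x_j − t_i‖₂²`. -/
def loss {d n : ℕ} (w0 : ℝ) (x0 : EuclideanSpace ℝ (Fin d)) (w : Fin n → ℝ)
    (t : Fin n → EuclideanSpace ℝ (Fin d)) (i : Fin n)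
    (x : Fin n → EuclideanSpace ℝ (Fin d)) : ℝ :=
  ‖w0 • x0 + (∑ j, w j • x j) - t i‖ ^ 2

/-- A pure Nash equilibrium of the Battling Influencers Game with common action
set `X`: every player plays in `X` and no player can strictly decrease its own
loss by a unilateral deviation inside `X`. -/
def IsPureNE {d n : ℕ} (X : Set (EuclideanSpace ℝ (Fin d))) (w0 : ℝ)
    (x0 : EuclideanSpace ℝ (Fin d)) (w : Fin n → ℝ)
    (t : Fin n → EuclideanSpace ℝ (Fin d))
    (x : Fin n → EuclideanSpace ℝ (Fin d)) : Prop :=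
  (∀ i, x i ∈ X) ∧
    ∀ i, ∀ y ∈ X, loss w0 x0 w t i x ≤ loss w0 x0 w t i (Function.update x i y)

/-! The Battling Influencers Game is an exact potential game: with
`Φ(x) = ‖w₀ x₀ + ∑ⱼ wⱼ xⱼ‖² − 2 ∑ⱼ wⱼ ⟪xⱼ, tⱼ⟫`, the difference `ℓᵢ − Φ` does not depend on `xᵢ`,
since the part of `ℓᵢ` that depends on `xᵢ` is `‖w₀ x₀ + ∑ⱼ wⱼ xⱼ‖² − 2 wᵢ ⟪xᵢ, tᵢ⟫`, shared by `Φ`.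
Hence a minimiser of the continuous function `Φ` over the compact set `𝒳ⁿ` is a pure Nash
equilibrium. -/

open Function Set

section PotentialGame

variable {ι α : Type*} [DecidableEq ι] {ℓ : ι → (ι → α) → ℝ} {Φ : (ι → α) → ℝ}

theorem le_update_of_isMinOn_potential
    (hΦ : ∀ i x y, ℓ i (update x i y) - Φ (update x i y) = ℓ i x - Φ x)
    {X : Set α} {x : ι → α} (hx : x ∈ univ.pi fun _ => X)
    (hmin : IsMinOn Φ (univ.pi fun _ => X) x) (i : ι) {y : α} (hy : y ∈ X) :
    ℓ i x ≤ ℓ i (update x i y) := by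
  have hΦle : Φ x ≤ Φ (update x i y) :=
    hmin ((update_mem_pi_iff_of_mem hx).2 fun _ => hy)
  linarith [hΦ i x y]

theorem exists_forall_le_update_of_isCompact [TopologicalSpace α]
    (hΦ : ∀ i x y, ℓ i (update x i y) - Φ (update x i y) = ℓ i x - Φ x)
    (hcont : Continuous Φ) {X : Set α} (hne : X.Nonempty) (hcpt : IsCompact X) :
    ∃ x, (∀ i, x i ∈ X) ∧ ∀ i, ∀ y ∈ X, ℓ i x ≤ ℓ i (update x i y) := by
  obtain ⟨c, hc⟩ := hne
  obtain ⟨x, hx, hmin⟩ := (isCompact_univ_pi fun (_ : ι) => hcpt).exists_isMinOn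
    ⟨fun _ => c, fun _ _ => hc⟩ hcont.continuousOn
  exact ⟨x, fun i => hx i (mem_univ i), le_update_of_isMinOn_potential hΦ hx hmin⟩

end PotentialGame

section Potential

variable {d n : ℕ} (w0 : ℝ) (x0 : EuclideanSpace ℝ (Fin d)) (w : Fin n → ℝ)
  (t : Fin n → EuclideanSpace ℝ (Fin d))

def potential (x : Fin n → EuclideanSpace ℝ (Fin d)) : ℝ :=
  ‖w0 • x0 + ∑ j, w j • x j‖ ^ 2 - 2 * ∑ j, w j * ⟪x j, t j⟫

theorem continuous_potential : Continuous (potential w0 x0 w t) := by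
  unfold potential
  fun_prop

theorem loss_sub_potential (i : Fin n) (x : Fin n → EuclideanSpace ℝ (Fin d)) :
    loss w0 x0 w t i x - potential w0 x0 w t x =
      ‖t i‖ ^ 2 - 2 * ⟪w0 • x0, t i⟫ - 2 * ∑ j, w j * ⟪x j, t i - t j⟫ := by
  simp only [loss, potential, norm_sub_sq_real, inner_add_left, sum_inner,
    real_inner_smul_left, inner_sub_right, mul_sub, Finset.sum_sub_distrib]
  ring

theorem loss_sub_potential_update (i : Fin n) (x : Fin n → EuclideanSpace ℝ (Fin d))
    (y : EuclideanSpace ℝ (Fin d)) :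
    loss w0 x0 w t i (update x i y) - potential w0 x0 w t (update x i y) =
      loss w0 x0 w t i x - potential w0 x0 w t x := by
  rw [loss_sub_potential, loss_sub_potential]
  congr 2
  refine Finset.sum_congr rfl fun j _ => ?_
  rcases eq_or_ne j i with rfl | hji
  · simp
  · rw [update_of_ne hji]

end Potential

theorem exists_pNE_general {d n : ℕ} (X : Set (EuclideanSpace ℝ (Fin d)))
    (hne : X.Nonempty) (hcpt : IsCompact X)
    (w0 : ℝ) (x0 : EuclideanSpace ℝ (Fin d)) (w : Fin n → ℝ)
    (t : Fin n → EuclideanSpace ℝ (Fin d)) :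
    ∃ x : Fin n → EuclideanSpace ℝ (Fin d), IsPureNE X w0 x0 w t x :=
  exists_forall_le_update_of_isCompact (loss_sub_potential_update w0 x0 w t)
    (continuous_potential w0 x0 w t) hne hcpt

/-- If the common action set `𝒳` is nonempty, compact, and convex, then the
Battling Influencers Game has at least one pure Nash equilibrium. -/
theorem exists_pNE {d n : ℕ} (X : Set (EuclideanSpace ℝ (Fin d)))
    (hne : X.Nonempty) (hcpt : IsCompact X) (hcvx : Convex ℝ X)
    (w0 : ℝ) (x0 : EuclideanSpace ℝ (Fin d)) (w : Fin n → ℝ)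
    (t : Fin n → EuclideanSpace ℝ (Fin d)) :
    ∃ x : Fin n → EuclideanSpace ℝ (Fin d), IsPureNE X w0 x0 w t x :=
  exists_pNE_general X hne hcpt w0 x0 w t

end
end

section
/- Suppose the targets t_1, ..., t_n ∈ ℝ^d are pairwise distinct and the weights w_1, ..., w_n are all nonzero. Then at every pure Nash equilibrium (x_1,...,x_n) of the Battling Influencers Game, at most one player's action lies in the topological interior of 𝒳; that is, |{ i ∈ {1,...,n} : x_i ∈ int 𝒳 }| ≤ 1. -/
open scoped RealInnerProductSpace

noncomputable section

/-!
A player whose action is interior can move it a little in any direction, and this shifts the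
aggregate `w₀ x₀ + ∑ wⱼ xⱼ` by `wᵢ` times that move; with `wᵢ ≠ 0` it can thus pull the aggregate
towards its target. So at an equilibrium every interior player's target equals the aggregate,
and distinct targets leave room for at most one such player.
-/

open Filter Topology

theorem Finset.sum_smul_update {ι R M : Type*} [Fintype ι] [DecidableEq ι] [Ring R]
    [AddCommGroup M] [Module R M] (w : ι → R) (x : ι → M) (i : ι) (y : M) :
    ∑ j, w j • Function.update x i y j = ∑ j, w j • x j + w i • (y - x i) := by
  have hupd : Function.update x i y = x + Pi.single i (y - x i) := by
    ext1 j
    rcases eq_or_ne j i with rfl | hj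
    · simp
    · simp [hj]
  simp [hupd, smul_add, Finset.sum_add_distrib, Pi.single_apply]

theorem eq_zero_of_forall_norm_le_norm_add_smul_sub {E : Type*} [NormedAddCommGroup E]
    [NormedSpace ℝ E] {X : Set E} {p u : E} {a : ℝ} (ha : a ≠ 0) (hX : X ∈ 𝓝 p)
    (hmin : ∀ y ∈ X, ‖u‖ ≤ ‖u + a • (y - p)‖) : u = 0 := by
  have hpath : Tendsto (fun c : ℝ => p - (c / a) • u) (𝓝[>] 0) (𝓝 p) := by
    have : Tendsto (fun c : ℝ => p - (c / a) • u) (𝓝 0) (𝓝 (p - (0 / a) • u)) :=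
      Continuous.tendsto (by fun_prop) _
    simpa using this.mono_left nhdsWithin_le_nhds
  obtain ⟨c, hcX, hc0, hc1⟩ := ((hpath.eventually hX).and (Ioo_mem_nhdsGT one_pos)).exists
  have hshrink : u + a • ((p - (c / a) • u) - p) = (1 - c) • u := by
    rw [sub_sub_cancel_left, smul_neg, smul_smul, mul_div_cancel₀ c ha]
    module
  have hle := hmin _ hcX
  rw [hshrink, norm_smul, Real.norm_of_nonneg (by linarith)] at hle
  exact norm_le_zero_iff.mp (by nlinarith [norm_nonneg u])

theorem loss_update {d n : ℕ} (w0 : ℝ) (x0 : EuclideanSpace ℝ (Fin d)) (w : Fin n → ℝ)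
    (t : Fin n → EuclideanSpace ℝ (Fin d)) (i : Fin n) (x : Fin n → EuclideanSpace ℝ (Fin d))
    (y : EuclideanSpace ℝ (Fin d)) :
    loss w0 x0 w t i (Function.update x i y) =
      ‖(w0 • x0 + (∑ j, w j • x j) - t i) + w i • (y - x i)‖ ^ 2 := by
  rw [loss, Finset.sum_smul_update]
  congr 2
  abel

theorem IsPureNE.aggregate_eq_target_of_mem_interior {d n : ℕ}
    {X : Set (EuclideanSpace ℝ (Fin d))} {w0 : ℝ} {x0 : EuclideanSpace ℝ (Fin d)}
    {w : Fin n → ℝ} {t : Fin n → EuclideanSpace ℝ (Fin d)} {x : Fin n → EuclideanSpace ℝ (Fin d)}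
    (hNE : IsPureNE X w0 x0 w t x) {i : Fin n} (hwi : w i ≠ 0) (hi : x i ∈ interior X) :
    w0 • x0 + (∑ j, w j • x j) = t i := by
  refine sub_eq_zero.mp (eq_zero_of_forall_norm_le_norm_add_smul_sub hwi
    (mem_interior_iff_mem_nhds.mp hi) fun y hy => ?_)
  have hle := hNE.2 i y hy
  rwa [loss_update, loss, sq_le_sq₀ (norm_nonneg _) (norm_nonneg _)] at hle

/-- All-but-at-most-one extreme exaggeration: if the targets are pairwise
distinct and all influence weights are nonzero, then at every pure Nash
equilibrium at most one player's action lies in the interior of `𝒳`. -/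
theorem pNE_at_most_one_interior {d n : ℕ} (X : Set (EuclideanSpace ℝ (Fin d)))
    (w0 : ℝ) (x0 : EuclideanSpace ℝ (Fin d)) (w : Fin n → ℝ)
    (t : Fin n → EuclideanSpace ℝ (Fin d))
    (ht : ∀ i j : Fin n, i ≠ j → t i ≠ t j) (hw : ∀ i, w i ≠ 0)
    (x : Fin n → EuclideanSpace ℝ (Fin d)) (hNE : IsPureNE X w0 x0 w t x) :
    {i : Fin n | x i ∈ interior X}.Subsingleton := by
  intro i hi j hj
  by_contra hij
  exact ht i j hij <|
    (hNE.aggregate_eq_target_of_mem_interior (hw i) hi).symm.trans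
      (hNE.aggregate_eq_target_of_mem_interior (hw j) hj)

end
end

section
/- If 𝒳 ⊆ ℝ^d is finite and nonempty and each k_i ≥ 1, then the Battling Influencers Game with finite action space F has at least one pure Nash equilibrium. -/
open scoped RealInnerProductSpace

noncomputable section

/-- The receiver's point in the Battling Influencers Game with finite action
space: `x̂ = w_0 x_0 + ∑_{i=1}^n w_i ∑_{j=1}^{k_i} x_i^{(j)}`, where player `i`'s
action is the `k_i`-tuple `S i`. -/
def receiverF {d n : ℕ} (k : Fin n → ℕ) (w0 : ℝ) (x0 : EuclideanSpace ℝ (Fin d))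
    (w : Fin n → ℝ) (S : (i : Fin n) → Fin (k i) → EuclideanSpace ℝ (Fin d)) :
    EuclideanSpace ℝ (Fin d) :=
  w0 • x0 + ∑ i, w i • ∑ j, S i j

/-- Player `i`'s loss: `ℓ_i = ‖x̂ − t_i‖₂²`. -/
def lossF {d n : ℕ} (k : Fin n → ℕ) (w0 : ℝ) (x0 : EuclideanSpace ℝ (Fin d))
    (w : Fin n → ℝ) (t : Fin n → EuclideanSpace ℝ (Fin d)) (i : Fin n)
    (S : (i : Fin n) → Fin (k i) → EuclideanSpace ℝ (Fin d)) : ℝ :=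
  ‖receiverF k w0 x0 w S - t i‖ ^ 2

/-!
The game is an exact potential game. A unilateral deviation of player `i` moves `x̂` by some
`δ`, which changes `ℓ_i = ‖x̂‖² - 2⟪x̂, t_i⟫ + ‖t_i‖²` by exactly as much as it changes
`Φ = ‖x̂‖² - 2 ∑_l ⟪w_l ∑ S_l, t_l⟫`. Hence a minimiser of `Φ` over the finitely many
action profiles is a pure Nash equilibrium.
-/

open Function

theorem Fintype.sum_apply_update {ι M : Type*} [Fintype ι] [DecidableEq ι] [AddCommGroup M]
    {A : ι → Type*} (g : ∀ i, A i → M) (s : ∀ i, A i) (i : ι) (a : A i) :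
    ∑ l, g l (update s i a l) = ∑ l, g l (s l) + (g i a - g i (s i)) := by
  simp only [apply_update g, Pi.update_eq_sub_add_single, Pi.add_apply, Pi.sub_apply,
    Finset.sum_add_distrib, Finset.sum_sub_distrib, Fintype.sum_pi_single']
  abel

section PotentialGame

variable {ι : Type*} [DecidableEq ι] {A : ι → Type*}

def IsPureNash (loss : ι → (∀ i, A i) → ℝ) (s : ∀ i, A i) : Prop :=
  ∀ i a, loss i s ≤ loss i (update s i a)

def IsExactPotential (loss : ι → (∀ i, A i) → ℝ) (Φ : (∀ i, A i) → ℝ) : Prop :=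
  ∀ i s a, loss i (update s i a) - loss i s = Φ (update s i a) - Φ s

variable {loss : ι → (∀ i, A i) → ℝ} {Φ : (∀ i, A i) → ℝ}

theorem IsExactPotential.comp {B : ι → Type*} (hΦ : IsExactPotential loss Φ)
    (f : ∀ i, B i → A i) :
    IsExactPotential (fun i s ↦ loss i (fun l ↦ f l (s l))) (fun s ↦ Φ (fun l ↦ f l (s l))) := by
  intro i s b
  have hf : (fun l ↦ f l (update s i b l)) = update (fun l ↦ f l (s l)) i (f i b) :=
    funext (apply_update f s i b)
  simpa only [hf] using hΦ i (fun l ↦ f l (s l)) (f i b)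

theorem IsExactPotential.isPureNash_of_forall_le (hΦ : IsExactPotential loss Φ) {s : ∀ i, A i}
    (hs : ∀ s', Φ s ≤ Φ s') : IsPureNash loss s := by
  intro i a
  have := hΦ i s a
  linarith [hs (update s i a)]

theorem IsExactPotential.exists_isPureNash [Finite (∀ i, A i)] [Nonempty (∀ i, A i)]
    (hΦ : IsExactPotential loss Φ) : ∃ s, IsPureNash loss s :=
  let ⟨s, hs⟩ := Finite.exists_min Φ
  ⟨s, hΦ.isPureNash_of_forall_le hs⟩

end PotentialGame

section SquaredDistanceGame

variable {ι : Type*} [Fintype ι] [DecidableEq ι] {A : ι → Type*}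
  {E : Type*} [NormedAddCommGroup E] [InnerProductSpace ℝ E]

theorem isExactPotential_norm_add_sum_sub_sq (c : E) (f : ∀ i, A i → E) (t : ι → E) :
    IsExactPotential (fun i s ↦ ‖c + ∑ l, f l (s l) - t i‖ ^ 2)
      (fun s ↦ ‖c + ∑ l, f l (s l)‖ ^ 2 - 2 * ∑ l, ⟪f l (s l), t l⟫) := by
  intro i s a
  simp only [Fintype.sum_apply_update f, Fintype.sum_apply_update fun l x ↦ ⟪f l x, t l⟫,
    ← add_assoc]
  rw [norm_sub_sq_real, norm_sub_sq_real, inner_add_left, inner_sub_left]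
  ring

end SquaredDistanceGame

theorem bigF_exists_pNE_general {d n : ℕ} (X : Set (EuclideanSpace ℝ (Fin d)))
    (hXfin : X.Finite) (hXne : X.Nonempty) (k : Fin n → ℕ)
    (w0 : ℝ) (x0 : EuclideanSpace ℝ (Fin d)) (w : Fin n → ℝ)
    (t : Fin n → EuclideanSpace ℝ (Fin d)) :
    ∃ S : (i : Fin n) → Fin (k i) → EuclideanSpace ℝ (Fin d),
      (∀ i j, S i j ∈ X) ∧
        ∀ i : Fin n, ∀ S' : Fin (k i) → EuclideanSpace ℝ (Fin d),
          (∀ j, S' j ∈ X) →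
            lossF k w0 x0 w t i S ≤ lossF k w0 x0 w t i (Function.update S i S') := by
  have : Finite X := hXfin.to_subtype
  have : Nonempty X := hXne.to_subtype
  have hΦ := (isExactPotential_norm_add_sum_sub_sq (w0 • x0)
    (fun i (S : Fin (k i) → EuclideanSpace ℝ (Fin d)) ↦ w i • ∑ j, S j) t).comp
    fun i (T : Fin (k i) → X) j ↦ (T j : EuclideanSpace ℝ (Fin d))
  obtain ⟨T, hT⟩ := hΦ.exists_isPureNash
  refine ⟨fun i j ↦ T i j, fun i j ↦ (T i j).2, fun i S' hS' ↦ ?_⟩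
  have hupd : (fun l j ↦ (update T i (fun j ↦ ⟨S' j, hS' j⟩) l j : EuclideanSpace ℝ (Fin d)))
      = update (fun l j ↦ (T l j : EuclideanSpace ℝ (Fin d))) i S' :=
    funext (apply_update (fun l (T : Fin (k l) → X) j ↦ (T j : EuclideanSpace ℝ (Fin d))) T i _)
  rw [← hupd]
  exact hT i _

/-- If `𝒳 ⊆ ℝ^d` is finite and nonempty and each `k_i ≥ 1`, then the Battling
Influencers Game with finite action space has at least one pure Nash
equilibrium. -/
theorem bigF_exists_pNE {d n : ℕ} (X : Set (EuclideanSpace ℝ (Fin d)))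
    (hXfin : X.Finite) (hXne : X.Nonempty) (k : Fin n → ℕ) (hk : ∀ i, 1 ≤ k i)
    (w0 : ℝ) (x0 : EuclideanSpace ℝ (Fin d)) (w : Fin n → ℝ)
    (t : Fin n → EuclideanSpace ℝ (Fin d)) :
    ∃ S : (i : Fin n) → Fin (k i) → EuclideanSpace ℝ (Fin d),
      (∀ i j, S i j ∈ X) ∧
        ∀ i : Fin n, ∀ S' : Fin (k i) → EuclideanSpace ℝ (Fin d),
          (∀ j, S' j ∈ X) →
            lossF k w0 x0 w t i S ≤ lossF k w0 x0 w t i (Function.update S i S') :=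
  bigF_exists_pNE_general X hXfin hXne k w0 x0 w t

end
end
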